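/- arXiv:2112.03746 — 2 statements merged into one kernel-verified Lean document; each statement's English description precedes it below -/
import Mathlib

section
/- Let A be a 1QFAC over a finite alphabet Σ with k classical states and n quantum basis states that recognizes a language L ⊆ Σ* with cut-point λ isolated by ε. Then the number of equivalence classes of Σ* under the Myhill–Nerode equivalence ≡_L (equivalently, the number of states of the minimal DFA accepting L) is at most k(1 + 2/ε)^{2n}. -/
noncomputable section

/-- The `n`-dimensional complex Hilbert space `ℂⁿ`. -/
abbrev QState (n : ℕ) := EuclideanSpace ℂ (Fin n)

/-- Apply a matrix to a vector of `ℂⁿ`. -/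
def mApply {n : ℕ} (M : Matrix (Fin n) (Fin n) ℂ) (v : QState n) : QState n :=
  Matrix.toEuclideanLin M v

/-- Myhill–Nerode equivalence: `x ≡_L y` iff `∀ z, xz ∈ L ↔ yz ∈ L`. -/
def mnEquiv {α : Type} (L : Set (List α)) (x y : List α) : Prop :=
  ∀ z : List α, x ++ z ∈ L ↔ y ++ z ∈ L

/-- Myhill–Nerode equivalence as a setoid. -/
def mnSetoid {α : Type} (L : Set (List α)) : Setoid (List α) where
  r := mnEquiv L
  iseqv := ⟨fun _ _ => Iff.rfl, fun h z => (h z).symm, fun h1 h2 z => (h1 z).trans (h2 z)⟩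

/-- A 1QFAC: classical states `S` with initial state and transitions, an `n`-dimensional
quantum part with a unit initial vector, a unitary for each (classical state, letter),
and an orthogonal projection (accepting measurement) for each classical state. -/
structure QFAC (Alph : Type) (S : Type) (n : ℕ) where
  s0 : S
  tr : S → Alph → S
  ψ0 : QState n
  ψ0_unit : ‖ψ0‖ = 1
  U : S → Alph → Matrix (Fin n) (Fin n) ℂ
  U_unitary : ∀ s σ, U s σ ∈ Matrix.unitaryGroup (Fin n) ℂ
  P : S → Matrix (Fin n) (Fin n) ℂ
  P_proj : ∀ s, (P s).conjTranspose = P s ∧ P s * P s = P s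

namespace QFAC
variable {Alph S : Type} {n : ℕ}

/-- `s_x`: the classical state reached after reading `x`. -/
def sState (A : QFAC Alph S n) (x : List Alph) : S := x.foldl A.tr A.s0

/-- `|ψ_x⟩`: the final quantum state after reading `x`. -/
def qState (A : QFAC Alph S n) (x : List Alph) : QState n :=
  (x.foldl (fun p σ => (A.tr p.1 σ, mApply (A.U p.1 σ) p.2)) (A.s0, A.ψ0)).2

/-- Acceptance probability `‖P_{s_x,acc}|ψ_x⟩‖²`. -/
def probAcc (A : QFAC Alph S n) (x : List Alph) : ℝ :=
  ‖mApply (A.P (A.sState x)) (A.qState x)‖ ^ 2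

/-- Recognition with cut-point `lam` isolated by `ε`. -/
def Recognizes (A : QFAC Alph S n) (L : Set (List Alph)) (lam ε : ℝ) : Prop :=
  (∀ x ∈ L, lam + ε ≤ A.probAcc x) ∧ (∀ x ∉ L, A.probAcc x ≤ lam - ε)

end QFAC

/-! Reading a common suffix from a common classical state acts on the quantum part by a
contraction, and the final measurement is a projection, so the acceptance probabilities of
`xz` and `yz` differ by at most `2‖ψ_x - ψ_y‖`. If `x` and `y` are Myhill–Nerode inequivalent,
some suffix puts them on opposite sides of the isolated cut-point, a gap of `2ε`; hence
representatives of distinct classes sharing a classical state have quantum states `ε` apart in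
the unit ball of `ℂⁿ ≅ ℝ²ⁿ`. The balls of radius `ε/2` around them are disjoint and lie in the
ball of radius `1 + ε/2`, so comparing volumes leaves room for at most `(1 + 2/ε)^(2n)` of them
per classical state. -/

open Metric MeasureTheory Module
open scoped Matrix.Norms.L2Operator

section Packing

variable {E : Type*} [NormedAddCommGroup E] [NormedSpace ℝ E] [FiniteDimensional ℝ E]

theorem Finset.card_le_of_separated {ι : Type*} {ε : ℝ} (hε : 0 < ε) {f : ι → E}
    (hf : ∀ i, ‖f i‖ ≤ 1) (hsep : Pairwise fun i j => ε ≤ ‖f i - f j‖) (t : Finset ι) :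
    (t.card : ℝ) ≤ (1 + 2 / ε) ^ finrank ℝ E := by
  borelize E
  set μ : Measure E := Measure.addHaar
  have hδ : 0 < ε / 2 := by positivity
  have hρ : 0 < 1 + ε / 2 := by positivity
  have hdisj : Set.PairwiseDisjoint (t : Set ι) fun i => ball (f i) (ε / 2) := by
    intro i _ j _ hij
    refine ball_disjoint_ball ?_
    rw [dist_eq_norm]
    linarith [hsep hij]
  have hsub : (⋃ i ∈ t, ball (f i) (ε / 2)) ⊆ ball 0 (1 + ε / 2) := by
    refine Set.iUnion₂_subset fun i _ => ball_subset_ball' ?_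
    rw [dist_zero_right]
    linarith [hf i]
  have hvol : (t.card : ENNReal) * ENNReal.ofReal ((ε / 2) ^ finrank ℝ E) * μ (ball 0 1) ≤
      ENNReal.ofReal ((1 + ε / 2) ^ finrank ℝ E) * μ (ball 0 1) := by
    calc (t.card : ENNReal) * ENNReal.ofReal ((ε / 2) ^ finrank ℝ E) * μ (ball 0 1)
        = μ (⋃ i ∈ t, ball (f i) (ε / 2)) := by
          rw [measure_biUnion_finset hdisj fun _ _ => measurableSet_ball]
          simp only [μ.addHaar_ball_of_pos _ hδ, Finset.sum_const, nsmul_eq_mul, mul_assoc]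
      _ ≤ μ (ball 0 (1 + ε / 2)) := measure_mono hsub
      _ = ENNReal.ofReal ((1 + ε / 2) ^ finrank ℝ E) * μ (ball 0 1) := μ.addHaar_ball_of_pos _ hρ
  have hcard : (t.card : ℝ) * (ε / 2) ^ finrank ℝ E ≤ (1 + ε / 2) ^ finrank ℝ E := by
    have := (ENNReal.mul_le_mul_iff_left (measure_ball_pos μ 0 one_pos).ne'
      measure_ball_lt_top.ne).1 hvol
    rw [← ENNReal.ofReal_natCast, ← ENNReal.ofReal_mul (by positivity)] at this
    exact (ENNReal.ofReal_le_ofReal_iff (by positivity)).1 this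
  calc (t.card : ℝ) ≤ (1 + ε / 2) ^ finrank ℝ E / (ε / 2) ^ finrank ℝ E :=
        (le_div_iff₀ (by positivity)).2 hcard
    _ = (1 + 2 / ε) ^ finrank ℝ E := by rw [← div_pow]; congr 1; field_simp; ring

theorem finite_and_natCard_le_of_separated {ι : Type*} {ε : ℝ} (hε : 0 < ε) {f : ι → E}
    (hf : ∀ i, ‖f i‖ ≤ 1) (hsep : Pairwise fun i j => ε ≤ ‖f i - f j‖) :
    Finite ι ∧ (Nat.card ι : ℝ) ≤ (1 + 2 / ε) ^ finrank ℝ E := by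
  have hfin : Finite ι := by
    by_contra hinf
    have : Infinite ι := not_finite_iff_infinite.mp hinf
    obtain ⟨t, ht⟩ := Infinite.exists_subset_card_eq ι (⌊(1 + 2 / ε) ^ finrank ℝ E⌋₊ + 1)
    have := Nat.le_floor (Finset.card_le_of_separated hε hf hsep t)
    omega
  have := Fintype.ofFinite ι
  refine ⟨hfin, ?_⟩
  rw [Nat.card_eq_fintype_card, ← Finset.card_univ]
  exact Finset.card_le_of_separated hε hf hsep _

end Packing

theorem finite_and_natCard_le_of_fibers {Q S : Type*} [Fintype S] (π : Q → S) {B : ℝ}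
    (h : ∀ s, Finite {q // π q = s} ∧ (Nat.card {q // π q = s} : ℝ) ≤ B) :
    Finite Q ∧ (Nat.card Q : ℝ) ≤ Fintype.card S * B := by
  have := fun s => (h s).1
  refine ⟨.of_equiv _ (Equiv.sigmaFiberEquiv π), ?_⟩
  rw [← Nat.card_congr (Equiv.sigmaFiberEquiv π), Nat.card_sigma, Nat.cast_sum]
  calc ∑ s, (Nat.card {q // π q = s} : ℝ) ≤ ∑ _s : S, B := Finset.sum_le_sum fun s _ => (h s).2
    _ = Fintype.card S * B := by rw [Finset.sum_const, Finset.card_univ, nsmul_eq_mul]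

theorem abs_norm_sq_sub_norm_sq_le {F : Type*} [SeminormedAddCommGroup F] {u w : F}
    (hu : ‖u‖ ≤ 1) (hw : ‖w‖ ≤ 1) : |‖u‖ ^ 2 - ‖w‖ ^ 2| ≤ 2 * ‖u - w‖ := by
  calc |‖u‖ ^ 2 - ‖w‖ ^ 2| = (‖u‖ + ‖w‖) * |‖u‖ - ‖w‖| := by
        rw [sq_sub_sq, abs_mul, abs_of_nonneg (by positivity : 0 ≤ ‖u‖ + ‖w‖)]
    _ ≤ 2 * ‖u - w‖ := by gcongr; exacts [by linarith, abs_norm_sub_norm_le u w]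

section mApply

variable {n : ℕ}

theorem mApply_eq_toEuclideanCLM (M : Matrix (Fin n) (Fin n) ℂ) (v : QState n) :
    mApply M v = Matrix.toEuclideanCLM (n := Fin n) (𝕜 := ℂ) M v := rfl

theorem mApply_one (v : QState n) : mApply 1 v = v := by
  simp only [mApply_eq_toEuclideanCLM, map_one, one_apply_eq_self]

theorem mApply_mul (M N : Matrix (Fin n) (Fin n) ℂ) (v : QState n) :
    mApply (M * N) v = mApply M (mApply N v) := by
  simp only [mApply_eq_toEuclideanCLM, map_mul, mul_apply_eq_comp]

theorem mApply_sub (M : Matrix (Fin n) (Fin n) ℂ) (u v : QState n) :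
    mApply M (u - v) = mApply M u - mApply M v :=
  map_sub _ _ _

theorem norm_mApply_le {M : Matrix (Fin n) (Fin n) ℂ} (hM : ‖M‖ ≤ 1) (v : QState n) :
    ‖mApply M v‖ ≤ ‖v‖ :=
  calc ‖mApply M v‖ ≤ ‖M‖ * ‖v‖ := (Matrix.toEuclideanCLM (n := Fin n) (𝕜 := ℂ) M).le_opNorm v
    _ ≤ ‖v‖ := mul_le_of_le_one_left (norm_nonneg v) hM

theorem norm_le_one_of_mem_unitaryGroup {U : Matrix (Fin n) (Fin n) ℂ}
    (hU : U ∈ Matrix.unitaryGroup (Fin n) ℂ) : ‖U‖ ≤ 1 := by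
  rcases subsingleton_or_nontrivial (Matrix (Fin n) (Fin n) ℂ) with h | h
  · simp [Subsingleton.elim U 0]
  · exact (CStarRing.norm_of_mem_unitary hU).le

end mApply

namespace QFAC

variable {Alph S : Type} {n : ℕ} (A : QFAC Alph S n)

theorem norm_P_le_one (s : S) : ‖A.P s‖ ≤ 1 :=
  IsStarProjection.norm_le _ ⟨(A.P_proj s).2, (A.P_proj s).1⟩

def evolution (A : QFAC Alph S n) : S → List Alph → Matrix (Fin n) (Fin n) ℂ
  | _, [] => 1
  | s, σ :: z => evolution A (A.tr s σ) z * A.U s σ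

theorem norm_mApply_evolution_le (s : S) (z : List Alph) (v : QState n) :
    ‖mApply (A.evolution s z) v‖ ≤ ‖v‖ := by
  induction z generalizing s v with
  | nil => rw [evolution, mApply_one]
  | cons σ z ih =>
    rw [evolution, mApply_mul]
    exact (ih _ _).trans (norm_mApply_le (norm_le_one_of_mem_unitaryGroup (A.U_unitary s σ)) v)

theorem foldl_eq_evolution (z : List Alph) (s : S) (ψ : QState n) :
    z.foldl (fun p σ => (A.tr p.1 σ, mApply (A.U p.1 σ) p.2)) (s, ψ) =
      (z.foldl A.tr s, mApply (A.evolution s z) ψ) := by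
  induction z generalizing s ψ with
  | nil => rw [evolution, mApply_one]; rfl
  | cons σ z ih => rw [List.foldl_cons, ih, evolution, mApply_mul]; rfl

theorem sState_append (x z : List Alph) :
    A.sState (x ++ z) = z.foldl A.tr (A.sState x) :=
  List.foldl_append

theorem qState_append (x z : List Alph) :
    A.qState (x ++ z) = mApply (A.evolution (A.sState x) z) (A.qState x) := by
  have hx : x.foldl (fun p σ => (A.tr p.1 σ, mApply (A.U p.1 σ) p.2)) (A.s0, A.ψ0) =
      (A.sState x, A.qState x) :=
    Prod.ext (by rw [foldl_eq_evolution]; rfl) rfl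
  rw [qState, List.foldl_append, hx, foldl_eq_evolution]

theorem norm_qState_le_one (x : List Alph) : ‖A.qState x‖ ≤ 1 :=
  (A.qState_append [] x ▸ A.norm_mApply_evolution_le A.s0 x A.ψ0).trans_eq A.ψ0_unit

theorem abs_probAcc_append_sub_le {x y : List Alph} (hs : A.sState x = A.sState y)
    (z : List Alph) :
    |A.probAcc (x ++ z) - A.probAcc (y ++ z)| ≤ 2 * ‖A.qState x - A.qState y‖ := by
  have hsz : A.sState (x ++ z) = A.sState (y ++ z) := by rw [sState_append, sState_append, hs]
  set P := A.P (A.sState (x ++ z))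
  have hP := A.norm_P_le_one (A.sState (x ++ z))
  calc |A.probAcc (x ++ z) - A.probAcc (y ++ z)|
      = |‖mApply P (A.qState (x ++ z))‖ ^ 2 - ‖mApply P (A.qState (y ++ z))‖ ^ 2| := by
        rw [probAcc, probAcc, ← hsz]
    _ ≤ 2 * ‖mApply P (A.qState (x ++ z)) - mApply P (A.qState (y ++ z))‖ :=
        abs_norm_sq_sub_norm_sq_le ((norm_mApply_le hP _).trans (A.norm_qState_le_one _))
          ((norm_mApply_le hP _).trans (A.norm_qState_le_one _))
    _ ≤ 2 * ‖A.qState x - A.qState y‖ := by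
        rw [← mApply_sub, qState_append, qState_append, hs, ← mApply_sub]
        gcongr
        exact (norm_mApply_le hP _).trans (A.norm_mApply_evolution_le _ _ _)

theorem Recognizes.two_mul_le_abs_probAcc_sub {A : QFAC Alph S n} {L : Set (List Alph)}
    {lam ε : ℝ} (hrec : A.Recognizes L lam ε) {x y : List Alph} (hxy : ¬(x ∈ L ↔ y ∈ L)) :
    2 * ε ≤ |A.probAcc x - A.probAcc y| := by
  by_cases hx : x ∈ L
  · have hy : y ∉ L := fun hy => hxy (iff_of_true hx hy)
    exact le_abs.2 (Or.inl (by linarith [hrec.1 x hx, hrec.2 y hy]))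
  · have hy : y ∈ L := by_contra fun hy => hxy (iff_of_false hx hy)
    exact le_abs.2 (Or.inr (by linarith [hrec.2 x hx, hrec.1 y hy]))

theorem Recognizes.le_norm_qState_sub {L : Set (List Alph)} {lam ε : ℝ}
    (hrec : A.Recognizes L lam ε) {x y : List Alph} (hs : A.sState x = A.sState y)
    (hxy : ¬mnEquiv L x y) : ε ≤ ‖A.qState x - A.qState y‖ := by
  obtain ⟨z, hz⟩ := not_forall.1 hxy
  linarith [hrec.two_mul_le_abs_probAcc_sub hz, A.abs_probAcc_append_sub_le hs z]

end QFAC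

theorem finrank_real_qState (n : ℕ) : finrank ℝ (QState n) = 2 * n := by
  rw [← Module.finrank_mul_finrank ℝ ℂ (QState n), Complex.finrank_real_complex,
    finrank_euclideanSpace_fin]

theorem stmt_4_general {Alph S : Type} [Fintype S] {n k : ℕ}
    (hk : Fintype.card S = k)
    (A : QFAC Alph S n) (L : Set (List Alph)) (lam ε : ℝ)
    (hε : 0 < ε)
    (hrec : A.Recognizes L lam ε) :
    Finite (Quotient (mnSetoid L)) ∧
    (Nat.card (Quotient (mnSetoid L)) : ℝ) ≤ (k : ℝ) * (1 + 2 / ε) ^ (2 * n) := by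
  let π : Quotient (mnSetoid L) → S := fun c => A.sState c.out
  rw [← hk, ← finrank_real_qState]
  refine finite_and_natCard_le_of_fibers π fun s =>
    finite_and_natCard_le_of_separated hε (f := fun c : {c // π c = s} => A.qState c.1.out)
      (fun _ => A.norm_qState_le_one _) ?_
  rintro ⟨c, hc⟩ ⟨d, hd⟩ hcd
  exact hrec.le_norm_qState_sub A (hc.trans hd.symm)
    fun h => hcd (Subtype.ext (Quotient.out_equiv_out.mp h))

/-- If a 1QFAC with `k` classical states and `n` quantum basis states
recognizes `L` with cut-point `lam` isolated by `ε`, then the number of Myhill–Nerode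
classes of `L` (= number of states of the minimal DFA) is at most `k(1 + 2/ε)^(2n)`. -/
theorem stmt_4 {Alph S : Type} [Fintype Alph] [Fintype S] {n k : ℕ}
    (hk : Fintype.card S = k)
    (A : QFAC Alph S n) (L : Set (List Alph)) (lam ε : ℝ)
    (hlam : 0 < lam ∧ lam < 1) (hε : 0 < ε)
    (hrec : A.Recognizes L lam ε) :
    Finite (Quotient (mnSetoid L)) ∧
    (Nat.card (Quotient (mnSetoid L)) : ℝ) ≤ (k : ℝ) * (1 + 2 / ε) ^ (2 * n) :=
  stmt_4_general hk A L lam ε hε hrec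

end
end

section
/- Let A be a 1QFAC over a finite alphabet Σ with classical state set S and n quantum basis states whose classical transition function δ satisfies: for all s₁, s₂ ∈ S with s₁ ≠ s₂ and all σ ∈ Σ, δ(s₁,σ) ≠ δ(s₂,σ). Then there exists an MO-1QFA over Σ with |S|·n quantum basis states whose acceptance probability on every input string x ∈ Σ* equals the acceptance probability of A on x. -/
noncomputable section

/-- An MO-1QFA over alphabet `Alph` with `n` quantum basis states. -/
structure MOQFA (Alph : Type) (n : ℕ) where
  ψ0 : QState n
  ψ0_unit : ‖ψ0‖ = 1
  U : Alph → Matrix (Fin n) (Fin n) ℂ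
  U_unitary : ∀ σ, U σ ∈ Matrix.unitaryGroup (Fin n) ℂ
  P : Matrix (Fin n) (Fin n) ℂ
  P_proj : P.conjTranspose = P ∧ P * P = P

namespace MOQFA
variable {Alph : Type} {n : ℕ}

def qState (A : MOQFA Alph n) (x : List Alph) : QState n :=
  x.foldl (fun v σ => mApply (A.U σ) v) A.ψ0

def probAcc (A : MOQFA Alph n) (x : List Alph) : ℝ := ‖mApply A.P (A.qState x)‖ ^ 2

def Recognizes (A : MOQFA Alph n) (L : Set (List Alph)) (lam ε : ℝ) : Prop :=
  (∀ x ∈ L, lam + ε ≤ A.probAcc x) ∧ (∀ x ∉ L, A.probAcc x ≤ lam - ε)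

end MOQFA

/-! Since `δ(·, σ)` is injective on the finite set `S`, it is a permutation. Encode the pair
`(s, |ψ⟩)` as the vector `|s⟩ ⊗ |ψ⟩` of `ℂ^S ⊗ ℂⁿ`. The letter `σ` then acts by the block matrix
`∑ₛ |δ(s,σ)⟩⟨s| ⊗ U_{sσ}`, a permutation of unitary blocks and hence unitary, and the accepting
projection is the block-diagonal `∑ₛ |s⟩⟨s| ⊗ P_{s,acc}`. By induction on the input, the MO-1QFA
reaches `|s_x⟩ ⊗ |ψ_x⟩`, and projecting it gives `|s_x⟩ ⊗ P_{s_x,acc}|ψ_x⟩`, of the same norm. -/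

open Matrix

lemma mApply_apply {m : ℕ} (M : Matrix (Fin m) (Fin m) ℂ) (v : QState m) (k : Fin m) :
    mApply M v k = ∑ k', M k k' * v k' := rfl

section BlockEncoding

variable {S : Type} {n m : ℕ} (e : S × Fin n ≃ Fin m)

lemma matrix_ext_of_equiv {X Y : Matrix (Fin m) (Fin m) ℂ}
    (h : ∀ t i u j, X (e (t, i)) (e (u, j)) = Y (e (t, i)) (e (u, j))) : X = Y := by
  ext k k'
  obtain ⟨⟨t, i⟩, rfl⟩ := e.surjective k
  obtain ⟨⟨u, j⟩, rfl⟩ := e.surjective k'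
  exact h t i u j

lemma sum_fin_eq_sum_sum [Fintype S] {M : Type*} [AddCommMonoid M] (g : Fin m → M) :
    ∑ k, g k = ∑ t, ∑ i, g (e (t, i)) := by
  rw [← e.sum_comp, Fintype.sum_prod_type]

variable [DecidableEq S]

/-- `|s⟩ ⊗ |ψ⟩`, with the basis `S × Fin n` of `ℂ^S ⊗ ℂⁿ` numbered by `e`. -/
def blockEmbed (s : S) (ψ : QState n) : QState m :=
  WithLp.toLp 2 fun k => if (e.symm k).1 = s then ψ (e.symm k).2 else 0

/-- `∑ₛ |f s⟩⟨s| ⊗ M s`, with the basis `S × Fin n` of `ℂ^S ⊗ ℂⁿ` numbered by `e`. -/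
def blockMatrix (f : S → S) (M : S → Matrix (Fin n) (Fin n) ℂ) : Matrix (Fin m) (Fin m) ℂ :=
  Matrix.of fun k k' =>
    if (e.symm k).1 = f (e.symm k').1 then M (e.symm k').1 (e.symm k).2 (e.symm k').2 else 0

@[simp]
lemma blockEmbed_apply (s t : S) (ψ : QState n) (i : Fin n) :
    blockEmbed e s ψ (e (t, i)) = if t = s then ψ i else 0 := by
  simp [blockEmbed]

@[simp]
lemma blockMatrix_apply (f : S → S) (M : S → Matrix (Fin n) (Fin n) ℂ) (t u : S) (i j : Fin n) :
    blockMatrix e f M (e (t, i)) (e (u, j)) = if t = f u then M u i j else 0 := by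
  simp [blockMatrix]

lemma conjTranspose_blockMatrix (f : S ≃ S) (M : S → Matrix (Fin n) (Fin n) ℂ) :
    (blockMatrix e f M)ᴴ = blockMatrix e f.symm fun s => (M (f.symm s))ᴴ := by
  refine matrix_ext_of_equiv e fun t i u j => ?_
  rw [conjTranspose_apply, blockMatrix_apply, blockMatrix_apply]
  obtain rfl | h := eq_or_ne u (f t)
  · simp
  · simp [h, Equiv.eq_symm_apply, eq_comm]

lemma blockMatrix_id_one : blockMatrix e id (fun _ => (1 : Matrix (Fin n) (Fin n) ℂ)) = 1 :=
  matrix_ext_of_equiv e fun t i u j => by simp [one_apply, Prod.ext_iff, ite_and]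

variable [Fintype S]

lemma norm_blockEmbed (s : S) (ψ : QState n) : ‖blockEmbed e s ψ‖ = ‖ψ‖ := by
  simp [EuclideanSpace.norm_eq, sum_fin_eq_sum_sum e, apply_ite, Finset.sum_ite_eq']

lemma mApply_blockMatrix_blockEmbed (f : S → S) (M : S → Matrix (Fin n) (Fin n) ℂ) (s : S)
    (ψ : QState n) :
    mApply (blockMatrix e f M) (blockEmbed e s ψ) = blockEmbed e (f s) (mApply (M s) ψ) := by
  ext k
  obtain ⟨⟨t, i⟩, rfl⟩ := e.surjective k
  simp [mApply_apply, sum_fin_eq_sum_sum e, ite_mul, mul_ite, Finset.sum_ite_eq']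

lemma blockMatrix_mul (f g : S → S) (M N : S → Matrix (Fin n) (Fin n) ℂ) :
    blockMatrix e f M * blockMatrix e g N = blockMatrix e (f ∘ g) fun s => M (g s) * N s :=
  matrix_ext_of_equiv e fun t i u j => by
    simp [Matrix.mul_apply, sum_fin_eq_sum_sum e, ite_mul, mul_ite, Finset.sum_ite_eq']

lemma blockMatrix_mem_unitaryGroup (f : S ≃ S) (M : S → Matrix (Fin n) (Fin n) ℂ)
    (hM : ∀ s, M s ∈ unitaryGroup (Fin n) ℂ) : blockMatrix e f M ∈ unitaryGroup (Fin m) ℂ := by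
  have hM' : ∀ s, (M s)ᴴ * M s = 1 := fun s => mem_unitaryGroup_iff'.mp (hM s)
  rw [mem_unitaryGroup_iff', star_eq_conjTranspose, conjTranspose_blockMatrix, blockMatrix_mul]
  simpa [hM'] using blockMatrix_id_one e

lemma blockMatrix_id_selfAdjoint_idempotent (M : S → Matrix (Fin n) (Fin n) ℂ)
    (hM : ∀ s, (M s)ᴴ = M s ∧ M s * M s = M s) :
    (blockMatrix e id M)ᴴ = blockMatrix e id M ∧
      blockMatrix e id M * blockMatrix e id M = blockMatrix e id M := by
  constructor
  · simpa [(hM _).1] using conjTranspose_blockMatrix e (Equiv.refl S) M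
  · simp [blockMatrix_mul, (hM _).2]

end BlockEncoding

namespace QFAC

variable {Alph S : Type} {n m : ℕ}

def step (A : QFAC Alph S n) (p : S × QState n) (σ : Alph) : S × QState n :=
  (A.tr p.1 σ, mApply (A.U p.1 σ) p.2)

lemma foldl_step_eq (A : QFAC Alph S n) (x : List Alph) :
    x.foldl A.step (A.s0, A.ψ0) = (A.sState x, A.qState x) :=
  Prod.ext (List.foldl_hom Prod.fst fun _ _ => rfl).symm rfl

variable [Fintype S] [DecidableEq S]

def toMOQFA (A : QFAC Alph S n) (e : S × Fin n ≃ Fin m)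
    (hδ : ∀ σ, Function.Injective (A.tr · σ)) : MOQFA Alph m where
  ψ0 := blockEmbed e A.s0 A.ψ0
  ψ0_unit := (norm_blockEmbed e _ _).trans A.ψ0_unit
  U σ := blockMatrix e (A.tr · σ) (A.U · σ)
  U_unitary σ := blockMatrix_mem_unitaryGroup e
    (Equiv.ofBijective _ (Finite.injective_iff_bijective.mp (hδ σ))) _ (A.U_unitary · σ)
  P := blockMatrix e id A.P
  P_proj := blockMatrix_id_selfAdjoint_idempotent e A.P A.P_proj

lemma toMOQFA_qState (A : QFAC Alph S n) (e : S × Fin n ≃ Fin m)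
    (hδ : ∀ σ, Function.Injective (A.tr · σ)) (x : List Alph) :
    (A.toMOQFA e hδ).qState x = blockEmbed e (A.sState x) (A.qState x) := by
  have h := List.foldl_hom (l := x) (g₁ := A.step) (init := (A.s0, A.ψ0))
    (g₂ := fun v σ => mApply ((A.toMOQFA e hδ).U σ) v)
    (fun p : S × QState n => blockEmbed e p.1 p.2)
    fun p σ => mApply_blockMatrix_blockEmbed e (A.tr · σ) (A.U · σ) p.1 p.2
  rwa [foldl_step_eq] at h

lemma toMOQFA_probAcc (A : QFAC Alph S n) (e : S × Fin n ≃ Fin m)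
    (hδ : ∀ σ, Function.Injective (A.tr · σ)) (x : List Alph) :
    (A.toMOQFA e hδ).probAcc x = A.probAcc x := by
  rw [MOQFA.probAcc, toMOQFA_qState]
  exact congrArg (· ^ 2) <|
    (congrArg norm (mApply_blockMatrix_blockEmbed e id A.P _ _)).trans (norm_blockEmbed e _ _)

end QFAC

/-- A 1QFAC whose classical transition is injective on states for each
letter can be simulated by an MO-1QFA with `|S|·n` quantum basis states. -/
theorem stmt_17 {Alph S : Type} [Fintype S] {n : ℕ} (A : QFAC Alph S n)
    (hδ : ∀ s₁ s₂ : S, s₁ ≠ s₂ → ∀ σ : Alph, A.tr s₁ σ ≠ A.tr s₂ σ) :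
    ∃ B : MOQFA Alph (Fintype.card S * n),
      ∀ x : List Alph, B.probAcc x = A.probAcc x := by
  classical
  have hinj : ∀ σ, Function.Injective (A.tr · σ) := fun σ s₁ s₂ h =>
    not_not.mp fun hne => hδ s₁ s₂ hne σ h
  exact ⟨A.toMOQFA (((Fintype.equivFin S).prodCongr (Equiv.refl _)).trans finProdFinEquiv) hinj,
    A.toMOQFA_probAcc _ hinj⟩
end
end
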